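/- arXiv:1102.2536 — 2 statements merged into one kernel-verified Lean document; each statement's English description precedes it below -/
import Mathlib

section
/- Let Q₀ be a probability measure on ℝ and let Γ be an open interval of parameters β for which Z(β) = ∫ exp(βx) dQ₀(x) < ∞; for β ∈ Γ let Q_β be the probability measure with dQ_β/dQ₀ = exp(βx)/Z(β), with mean μ_β and variance σ²_β. Then for all α, β ∈ Γ there exists γ between α and β such that D(Q_α‖Q_β) = (σ²_γ / 2)·(α − β)². -/
/-!
With `Λ = log Z` the cumulant generating function of `Q₀`, the log-likelihood ratio of two tilts is
affine: `log dQ_α/dQ_β = (α - β) x + Λ β - Λ α`. Integrating against `Q_α`, whose mean is `Λ' α`,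
gives `D(Q_α‖Q_β) = Λ β - Λ α - Λ' α (β - α)`, which Taylor's theorem with Lagrange remainder
turns into `Λ'' γ / 2 (β - α)²`; finally `Λ'' γ` is the variance of `Q_γ`.
-/

open MeasureTheory ProbabilityTheory Real

open Classical in
noncomputable def klDiv {Ω : Type*} [MeasurableSpace Ω] (P Q : Measure Ω) : EReal :=
  if P ≪ Q ∧ Integrable (fun ω => Real.log (P.rnDeriv Q ω).toReal) P
  then ((∫ ω, Real.log (P.rnDeriv Q ω).toReal ∂P : ℝ) : EReal)
  else ⊤

open Set

theorem exists_mem_uIcc_sub_sub_deriv_mul_eq_iteratedDeriv_two {f : ℝ → ℝ} {a b : ℝ}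
    {s : Set ℝ} (hs : IsOpen s) (hf : ContDiffOn ℝ 2 f s) (hab : uIcc a b ⊆ s) :
    ∃ c ∈ uIcc a b, f b - f a - deriv f a * (b - a) = iteratedDeriv 2 f c / 2 * (b - a) ^ 2 := by
  rcases eq_or_ne a b with rfl | hne
  · exact ⟨a, left_mem_uIcc, by simp⟩
  obtain ⟨c, hc, hTaylor⟩ := taylor_mean_remainder_lagrange_iteratedDeriv (n := 1) hne (hf.mono hab)
  have hderiv : derivWithin f (uIcc a b) a = deriv f a :=
    ((hf.contDiffAt (hs.mem_nhds (hab left_mem_uIcc))).differentiableAt (by norm_num)).derivWithin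
      (uniqueDiffOn_uIcc hne a left_mem_uIcc)
  refine ⟨c, Ioo_subset_Icc_self hc, ?_⟩
  norm_num [taylorWithinEval_succ, hderiv] at hTaylor
  linear_combination hTaylor

theorem klDiv_eq_integral_llr {Ω : Type*} [MeasurableSpace Ω] {P Q : Measure Ω} (hPQ : P ≪ Q)
    (hint : Integrable (llr P Q) P) : klDiv P Q = ((∫ ω, llr P Q ω ∂P : ℝ) : EReal) :=
  if_pos ⟨hPQ, hint⟩

section Tilted

variable {Ω : Type*} [MeasurableSpace Ω] {μ : Measure Ω} {X : Ω → ℝ} {α β : ℝ}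

theorem llr_tilted_mul_ae_eq [SigmaFinite μ] (hX : AEMeasurable X μ)
    (hα : Integrable (fun ω ↦ exp (α * X ω)) μ) (hβ : Integrable (fun ω ↦ exp (β * X ω)) μ) :
    llr (μ.tilted (α * X ·)) (μ.tilted (β * X ·)) =ᵐ[μ.tilted (α * X ·)]
      fun ω ↦ (α - β) * X ω + cgf X μ β - cgf X μ α := by
  have hleft := llr_tilted_left (absolutelyContinuous_tilted hβ) hα
    ((hX.const_mul α).mono_ac (tilted_absolutelyContinuous μ _))
  have hright := llr_tilted_right Measure.AbsolutelyContinuous.rfl hβ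
  refine (tilted_absolutelyContinuous μ _).ae_le ?_
  filter_upwards [hleft, hright, llr_self μ] with ω hl hr hself
  rw [hl, hr, hself, cgf, cgf, mgf, mgf]
  simp only [Pi.zero_apply]
  ring

theorem integral_llr_tilted_mul [SigmaFinite μ] [NeZero μ]
    (hα : α ∈ interior (integrableExpSet X μ)) (hβ : β ∈ interior (integrableExpSet X μ)) :
    ∫ ω, llr (μ.tilted (α * X ·)) (μ.tilted (β * X ·)) ω ∂(μ.tilted (α * X ·)) =
      (α - β) * deriv (cgf X μ) α + cgf X μ β - cgf X μ α := by
  have hα' := interior_subset (s := integrableExpSet X μ) hα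
  have : IsProbabilityMeasure (μ.tilted (α * X ·)) := isProbabilityMeasure_tilted hα'
  have hX : Integrable X (μ.tilted (α * X ·)) := (memLp_tilted_mul hα 1).integrable le_rfl
  rw [integral_congr_ae (llr_tilted_mul_ae_eq (aemeasurable_of_mem_interior_integrableExpSet hα)
    hα' (interior_subset (s := integrableExpSet X μ) hβ)), integral_sub, integral_add,
    integral_const_mul, integral_tilted_mul_self hα]
  · simp
  all_goals fun_prop

theorem klDiv_tilted_mul [SigmaFinite μ] [NeZero μ]
    (hα : α ∈ interior (integrableExpSet X μ)) (hβ : β ∈ interior (integrableExpSet X μ)) :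
    klDiv (μ.tilted (α * X ·)) (μ.tilted (β * X ·)) =
      (((α - β) * deriv (cgf X μ) α + cgf X μ β - cgf X μ α : ℝ) : EReal) := by
  have hα' := interior_subset (s := integrableExpSet X μ) hα
  have hβ' := interior_subset (s := integrableExpSet X μ) hβ
  have hX : Integrable X (μ.tilted (α * X ·)) := (memLp_tilted_mul hα 1).integrable le_rfl
  have hac : μ.tilted (α * X ·) ≪ μ.tilted (β * X ·) :=
    (tilted_absolutelyContinuous μ _).trans (absolutelyContinuous_tilted hβ')
  have hint : Integrable (llr (μ.tilted (α * X ·)) (μ.tilted (β * X ·))) (μ.tilted (α * X ·)) :=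
    (integrable_congr (llr_tilted_mul_ae_eq (aemeasurable_of_mem_interior_integrableExpSet hα)
      hα' hβ')).2 (by fun_prop)
  rw [klDiv_eq_integral_llr hac hint, integral_llr_tilted_mul hα hβ]

end Tilted

theorem stmt_1
    (Q₀ : Measure ℝ) [IsProbabilityMeasure Q₀]
    (Γ : Set ℝ) (hΓopen : IsOpen Γ) (hΓconn : Γ.OrdConnected)
    (hZ : ∀ β ∈ Γ, Integrable (fun x => Real.exp (β * x)) Q₀)
    (Q : ℝ → Measure ℝ)
    (hQ : ∀ β ∈ Γ, Q β = Q₀.withDensity (fun x =>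
      ENNReal.ofReal (Real.exp (β * x) / ∫ y, Real.exp (β * y) ∂Q₀)))
    (α β : ℝ) (hα : α ∈ Γ) (hβ : β ∈ Γ) :
    ∃ γ ∈ Set.Icc (min α β) (max α β),
      klDiv (Q α) (Q β) =
        ((variance id (Q γ) / 2 * (α - β) ^ 2 : ℝ) : EReal) := by
  have hQ_tilted : ∀ t ∈ Γ, Q t = Q₀.tilted (t * id ·) := hQ
  have hΓ_interior : Γ ⊆ interior (integrableExpSet id Q₀) := interior_maximal hZ hΓopen
  obtain ⟨γ, hγ, hTaylor⟩ := exists_mem_uIcc_sub_sub_deriv_mul_eq_iteratedDeriv_two hΓopen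
    ((analyticOn_cgf.mono hΓ_interior).contDiffOn hΓopen.uniqueDiffOn) (hΓconn.uIcc_subset hα hβ)
  have hγΓ : γ ∈ Γ := hΓconn.uIcc_subset hα hβ hγ
  refine ⟨γ, hγ, ?_⟩
  rw [hQ_tilted α hα, hQ_tilted β hβ, hQ_tilted γ hγΓ,
    klDiv_tilted_mul (hΓ_interior hα) (hΓ_interior hβ), variance_tilted_mul (hΓ_interior hγΓ)]
  congr 1
  linear_combination hTaylor
end

section
/- Let n ≥ 1 and 0 < p < 1, and let bin(n,p) denote the binomial distribution on {0,1,…,n}. For every probability measure P on {0,1,…,n} with mean E := Σ_j j·P({j}), if either E ≤ np ≤ n/2 or E ≥ np ≥ n/2, then D(P‖bin(n,p)) ≥ (E − np)² / (2 n p (1−p)). In particular, for p = 1/2 the inequality D(P‖bin(n,1/2)) ≥ 2(E − n/2)²/n holds for every probability measure P on {0,1,…,n}. -/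
/-
Donsker–Varadhan: for every `t`, `D(P‖Q) ≥ t · E_P[X] - log E_Q[exp (t X)]`, which follows from
Gibbs' inequality for `P` against the exponential tilt of `Q`. For `Q = bin(n,p)` the moment
generating function is `(1 - p + p eᵗ)ⁿ`, and its cumulant satisfies the sub-Gaussian bound
`log (1 - p + p eᵗ) ≤ p t + p (1 - p) t² / 2` whenever `t` tilts `p` away from `1/2`
(`t ≤ 0` for `p ≤ 1/2`, `t ≥ 0` for `p ≥ 1/2`): the variance of the tilted Bernoulli law then
stays below `p (1 - p)`. Optimising over `t` gives `t = (E - np) / (np(1 - p))`, which has the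
required sign exactly under the hypotheses on `E`.
-/

open MeasureTheory ProbabilityTheory Real

/-- The binomial distribution on ℕ with parameters n and p, with point probabilities
C(n,j) p^j (1-p)^(n-j) for j = 0,…,n. -/
noncomputable def binMeasure (n : ℕ) (p : ℝ) : Measure ℕ :=
  Measure.sum (fun j : ℕ =>
    ENNReal.ofReal ((n.choose j : ℝ) * p ^ j * (1 - p) ^ (n - j)) • Measure.dirac j)

open Finset

lemma one_sub_mul_one_sub_exp_add_mul_exp_nonneg {p t : ℝ} (hp : p ≤ 1 / 2) (ht : t ≤ 0) :
    0 ≤ (1 - p) * (1 - exp t) + p * t * exp t := by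
  have h : exp t * -t ≤ 1 - exp t := by
    have := mul_le_mul_of_nonneg_left (add_one_le_exp (-t)) (exp_pos t).le
    rw [← exp_add, add_neg_cancel, exp_zero] at this
    linarith
  linarith [mul_le_mul_of_nonneg_left h (by linarith : (0 : ℝ) ≤ 1 - p),
    mul_nonneg (exp_pos t).le (mul_nonneg_of_nonpos_of_nonpos ht (by linarith : 2 * p - 1 ≤ 0))]

lemma log_one_sub_add_mul_exp_le_of_nonpos {p l : ℝ} (hp0 : 0 ≤ p) (hp : p ≤ 1 / 2) (hl : l ≤ 0) :
    log (1 - p + p * exp l) ≤ p * l + p * (1 - p) * l ^ 2 / 2 := by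
  set ψ : ℝ → ℝ := fun t ↦ 1 + (1 - p) * t - exp t * (1 - p * t)
  set φ : ℝ → ℝ := fun t ↦ p * t + p * (1 - p) * t ^ 2 / 2 - log (1 - p + p * exp t)
  have hD (t : ℝ) : 0 < 1 - p + p * exp t := by nlinarith [exp_pos t]
  have hψ' (t : ℝ) : HasDerivAt ψ ((1 - p) * (1 - exp t) + p * t * exp t) t :=
    ((((hasDerivAt_id' t).const_mul (1 - p)).const_add 1).sub
      ((hasDerivAt_exp t).mul (((hasDerivAt_id' t).const_mul p).const_sub 1))).congr_deriv
      (by ring)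
  have hφ' (t : ℝ) : HasDerivAt φ (p * (1 - p) * ψ t / (1 - p + p * exp t)) t :=
    ((((hasDerivAt_id' t).const_mul p).add
      (((hasDerivAt_pow 2 t).const_mul (p * (1 - p))).div_const 2)).sub
      ((((hasDerivAt_exp t).const_mul p).const_add (1 - p)).log (hD t).ne')).congr_deriv
      (by field_simp [(hD t).ne']; ring)
  have hψ_mono : MonotoneOn ψ (Set.Iic 0) := by
    refine monotoneOn_of_hasDerivWithinAt_nonneg (convex_Iic 0)
      (fun t _ ↦ (hψ' t).continuousAt.continuousWithinAt) (fun t _ ↦ (hψ' t).hasDerivWithinAt)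
      fun t ht ↦ ?_
    rw [interior_Iic] at ht
    exact one_sub_mul_one_sub_exp_add_mul_exp_nonneg hp ht.le
  have hφ_anti : AntitoneOn φ (Set.Iic 0) := by
    refine antitoneOn_of_hasDerivWithinAt_nonpos (convex_Iic 0)
      (fun t _ ↦ (hφ' t).continuousAt.continuousWithinAt) (fun t _ ↦ (hφ' t).hasDerivWithinAt)
      fun t ht ↦ ?_
    rw [interior_Iic] at ht
    have hψt : ψ t ≤ 0 := by
      simpa [ψ] using hψ_mono (Set.mem_Iic.2 ht.le) (Set.mem_Iic.2 le_rfl) ht.le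
    exact div_nonpos_of_nonpos_of_nonneg
      (mul_nonpos_of_nonneg_of_nonpos (mul_nonneg hp0 (by linarith)) hψt) (hD t).le
  have hφ0 : φ 0 = 0 := by simp [φ]
  exact sub_nonneg.1 (hφ0 ▸ hφ_anti hl (Set.mem_Iic.2 le_rfl) hl)

lemma log_one_sub_add_mul_exp_le {p l : ℝ} (hp0 : 0 ≤ p) (hp1 : p ≤ 1)
    (h : (l ≤ 0 ∧ p ≤ 1 / 2) ∨ (0 ≤ l ∧ 1 / 2 ≤ p)) :
    log (1 - p + p * exp l) ≤ p * l + p * (1 - p) * l ^ 2 / 2 := by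
  rcases h with ⟨hl, hp⟩ | ⟨hl, hp⟩
  · exact log_one_sub_add_mul_exp_le_of_nonpos hp0 hp hl
  · -- the bound is invariant under `(p, l) ↦ (1 - p, -l)`
    have h := log_one_sub_add_mul_exp_le_of_nonpos (p := 1 - p) (l := -l)
      (by linarith) (by linarith) (by linarith)
    have hexp : exp (-l) * exp l = 1 := by rw [← exp_add, neg_add_cancel, exp_zero]
    have hflip : 1 - (1 - p) + (1 - p) * exp (-l) = exp (-l) * (1 - p + p * exp l) := by
      linear_combination -p * hexp
    have hD : 0 < 1 - p + p * exp l := by nlinarith [exp_pos l]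
    rw [hflip, log_mul (exp_pos _).ne' hD.ne', log_exp] at h
    linarith

lemma integral_sub_log_integral_exp_le_integral_llr {α : Type*} [MeasurableSpace α]
    {μ ν : Measure α} [IsProbabilityMeasure μ] [SigmaFinite ν] (hμν : μ ≪ ν)
    (h_int : Integrable (llr μ ν) μ) {f : α → ℝ} (hfμ : Integrable f μ)
    (hfν : Integrable (fun x ↦ exp (f x)) ν) :
    ∫ x, f x ∂μ - log (∫ x, exp (f x) ∂ν) ≤ ∫ x, llr μ ν x ∂μ := by
  have : NeZero ν :=
    ⟨fun hν ↦ IsProbabilityMeasure.ne_zero μ (Measure.absolutelyContinuous_zero_iff.1 (hν ▸ hμν))⟩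
  have : IsProbabilityMeasure (ν.tilted f) := isProbabilityMeasure_tilted hfν
  -- Gibbs' inequality for `μ` against `ν.tilted f`, whose log-likelihood ratio is
  -- `llr μ ν - f + log ∫ exp f ∂ν`
  have hgibbs := InformationTheory.integral_llr_add_sub_measure_univ_nonneg
    (hμν.trans (absolutelyContinuous_tilted hfν)) (integrable_llr_tilted_right hμν hfμ h_int hfν)
  rw [integral_llr_tilted_right hμν hfμ hfν h_int] at hgibbs
  simp only [probReal_univ] at hgibbs
  linarith

lemma integrable_of_finite_support {X : Type*} [MeasurableSpace X]
    [MeasurableSingletonClass X] [Countable X] {μ : Measure X} [IsFiniteMeasure μ] {s : Finset X}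
    (hs : ∀ x ∉ s, μ {x} = 0) (f : X → ℝ) : Integrable f μ := by
  rw [← μ.sum_smul_dirac]
  exact integrable_sum_dirac (fun _ ↦ measure_ne_top _ _)
    (summable_of_ne_finset_zero (s := s) fun x hx ↦ by simp [hs x hx])

lemma integrable_binMeasure (n : ℕ) (p : ℝ) (f : ℕ → ℝ) : Integrable f (binMeasure n p) :=
  integrable_sum_dirac (x := fun j ↦ j) (fun _ ↦ ENNReal.ofReal_ne_top)
    (summable_of_ne_finset_zero (s := range (n + 1)) fun j hj ↦ by
      simp [Nat.choose_eq_zero_of_lt (by simpa using hj : n < j)])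

lemma integral_binMeasure (n : ℕ) {p : ℝ} (hp0 : 0 ≤ p) (hp1 : p ≤ 1) (f : ℕ → ℝ) :
    ∫ j, f j ∂binMeasure n p =
      ∑ j ∈ range (n + 1), n.choose j * p ^ j * (1 - p) ^ (n - j) * f j := by
  rw [binMeasure, integral_sum_dirac (x := fun j ↦ j) fun _ ↦ ENNReal.ofReal_ne_top,
    tsum_eq_sum (s := range (n + 1)) fun j hj ↦ by
      simp [Nat.choose_eq_zero_of_lt (by simpa using hj : n < j)]]
  refine sum_congr rfl fun j _ ↦ ?_
  rw [ENNReal.toReal_ofReal (by have := sub_nonneg.2 hp1; positivity), smul_eq_mul]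

lemma integral_exp_mul_binMeasure (n : ℕ) {p : ℝ} (hp0 : 0 ≤ p) (hp1 : p ≤ 1) (l : ℝ) :
    ∫ j, exp (l * j) ∂binMeasure n p = (1 - p + p * exp l) ^ n := by
  rw [integral_binMeasure n hp0 hp1, add_comm (1 - p), add_pow]
  refine sum_congr rfl fun j _ ↦ ?_
  rw [mul_comm l, exp_nat_mul, mul_pow]
  ring

instance isFiniteMeasure_binMeasure (n : ℕ) (p : ℝ) : IsFiniteMeasure (binMeasure n p) :=
  (integrable_const_iff_isFiniteMeasure one_ne_zero).1 (integrable_binMeasure n p _)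

lemma mul_integral_sub_log_le_integral_llr_binMeasure (n : ℕ) {p : ℝ} (hp0 : 0 ≤ p)
    (hp1 : p ≤ 1) {P : Measure ℕ} [IsProbabilityMeasure P]
    (hsupp : ∀ j ∉ range (n + 1), P {j} = 0) (hPQ : P ≪ binMeasure n p)
    (h_int : Integrable (llr P (binMeasure n p)) P) (l : ℝ) :
    l * ∫ j, (j : ℝ) ∂P - n * log (1 - p + p * exp l) ≤ ∫ j, llr P (binMeasure n p) j ∂P := by
  have h := integral_sub_log_integral_exp_le_integral_llr hPQ h_int (f := fun j ↦ l * j)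
    (integrable_of_finite_support hsupp _) (integrable_binMeasure n p _)
  rwa [integral_const_mul, integral_exp_mul_binMeasure n hp0 hp1, log_pow] at h

lemma sq_div_le_integral_llr_binMeasure {n : ℕ} (hn : 1 ≤ n) {p : ℝ} (hp0 : 0 < p) (hp1 : p < 1)
    {P : Measure ℕ} [IsProbabilityMeasure P] (hsupp : ∀ j ∉ range (n + 1), P {j} = 0)
    (hPQ : P ≪ binMeasure n p) (h_int : Integrable (llr P (binMeasure n p)) P) {E : ℝ}
    (hE : ∫ j, (j : ℝ) ∂P = E)
    (hcond : (E ≤ n * p ∧ (n : ℝ) * p ≤ n / 2) ∨ ((n : ℝ) * p ≤ E ∧ (n : ℝ) / 2 ≤ n * p)) :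
    (E - n * p) ^ 2 / (2 * n * p * (1 - p)) ≤ ∫ j, llr P (binMeasure n p) j ∂P := by
  have hn' : (0 : ℝ) < n := by exact_mod_cast hn
  have hd : 0 < n * p * (1 - p) := by have := sub_pos.2 hp1; positivity
  set l := (E - n * p) / (n * p * (1 - p))
  have hl : (l ≤ 0 ∧ p ≤ 1 / 2) ∨ (0 ≤ l ∧ 1 / 2 ≤ p) := by
    rcases hcond with ⟨hE, hp⟩ | ⟨hE, hp⟩
    · exact Or.inl ⟨div_nonpos_of_nonpos_of_nonneg (by linarith) hd.le, by nlinarith⟩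
    · exact Or.inr ⟨div_nonneg (by linarith) hd.le, by nlinarith⟩
  have hDV := mul_integral_sub_log_le_integral_llr_binMeasure n hp0.le hp1.le hsupp hPQ h_int l
  rw [hE] at hDV
  have hmgf := log_one_sub_add_mul_exp_le hp0.le hp1.le hl
  calc (E - n * p) ^ 2 / (2 * n * p * (1 - p))
      = l * E - n * (p * l + p * (1 - p) * l ^ 2 / 2) := by
        simp only [l]; field_simp; ring
    _ ≤ l * E - n * log (1 - p + p * exp l) := by gcongr
    _ ≤ _ := hDV

lemma le_klDiv_of_le_integral_llr {Ω : Type*} [MeasurableSpace Ω] {P Q : Measure Ω} {x : ℝ}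
    (h : P ≪ Q → Integrable (llr P Q) P → x ≤ ∫ ω, llr P Q ω ∂P) : (x : EReal) ≤ klDiv P Q := by
  unfold klDiv
  split_ifs with hPQ
  · exact EReal.coe_le_coe_iff.2 (h hPQ.1 hPQ.2)
  · exact le_top

theorem stmt_6
    (n : ℕ) (hn : 1 ≤ n) (p : ℝ) (hp0 : 0 < p) (hp1 : p < 1)
    (P : Measure ℕ) [IsProbabilityMeasure P] (hsupp : P {j | n < j} = 0)
    (E : ℝ) (hE : E = ∑' j : ℕ, (j : ℝ) * (P {j}).toReal) :
    ((E ≤ n * p ∧ (n : ℝ) * p ≤ n / 2) ∨ ((n : ℝ) * p ≤ E ∧ (n : ℝ) / 2 ≤ n * p) →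
      (((E - n * p) ^ 2 / (2 * n * p * (1 - p)) : ℝ) : EReal) ≤ klDiv P (binMeasure n p)) ∧
    (p = 1 / 2 →
      ((2 * (E - n / 2) ^ 2 / n : ℝ) : EReal) ≤ klDiv P (binMeasure n p)) := by
  have hzero : ∀ j ∉ range (n + 1), P {j} = 0 := fun j hj ↦
    measure_mono_null (by simpa using hj) hsupp
  have hmean : ∫ j, (j : ℝ) ∂P = E := by
    rw [hE, integral_countable (integrable_of_finite_support hzero _)]
    simp [measureReal_def, mul_comm]
  have hbound := fun hcond ↦ le_klDiv_of_le_integral_llr fun hPQ h_int ↦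
    sq_div_le_integral_llr_binMeasure hn hp0 hp1 hzero hPQ h_int hmean hcond
  refine ⟨hbound, fun hp ↦ ?_⟩
  have hnp : (n : ℝ) * p = n / 2 := by rw [hp]; ring
  have heq : (E - n * p) ^ 2 / (2 * n * p * (1 - p)) = 2 * (E - n / 2) ^ 2 / n := by
    rw [hp]; field_simp; ring
  rw [← heq]
  exact hbound ((le_total E (n * p)).imp (fun h ↦ ⟨h, hnp.le⟩) fun h ↦ ⟨h, hnp.ge⟩)
end
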